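/- arXiv:2312.15546 — 2 statements merged into one kernel-verified Lean document; each statement's English description precedes it below -/
import Mathlib

section
/- If A is an N×N complex matrix with numerical radius r(A) ≤ 1, then the operator norm of every power satisfies ‖Aⁿ‖ ≤ 2 for all n ≥ 1. -/
noncomputable def opNorm {N : ℕ} (A : Matrix (Fin N) (Fin N) ℂ) : ℝ :=
  ‖Matrix.toEuclideanCLM (𝕜 := ℂ) A‖

noncomputable def numRad {N : ℕ} (A : Matrix (Fin N) (Fin N) ℂ) : ℝ :=
  sSup {r : ℝ | ∃ x : EuclideanSpace ℂ (Fin N), ‖x‖ = 1 ∧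
    r = ‖(inner (𝕜 := ℂ) x (Matrix.toEuclideanCLM (𝕜 := ℂ) A x))‖}

noncomputable def numRange {N : ℕ} (A : Matrix (Fin N) (Fin N) ℂ) : Set ℂ :=
  {z : ℂ | ∃ x : EuclideanSpace ℂ (Fin N), ‖x‖ = 1 ∧
    z = inner (𝕜 := ℂ) x (Matrix.toEuclideanCLM (𝕜 := ℂ) A x)}

/-!
Pearcy's proof of the power inequality. For `r(T) ≤ 1` and `‖c‖ ≤ 1` we have
`0 ≤ Re ⟪u, (1 - c T) u⟫`. Given `‖w‖ ≤ 1`, write `w = zⁿ`, let `ω` be a primitive `n`-th root of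
unity and `Sⱼ = ∑_{i<n} (ωʲ z T)ⁱ`. Then `(1 - ωʲ z T) Sⱼ = 1 - w Tⁿ` and `∑ⱼ Sⱼ = n`, so
`n Re ⟪v, (1 - w Tⁿ) v⟫ = ∑ⱼ Re ⟪Sⱼ v, (1 - ωʲ z T) Sⱼ v⟫ ≥ 0`; choosing the phase of `w` gives
`r(Tⁿ) ≤ 1`. Polarization then bounds `‖Tⁿ‖` by `2 r(Tⁿ)`.
-/

open Finset Complex ComplexConjugate
open scoped InnerProductSpace

theorem sum_geom_sum_smul_eq_natCast {K A : Type*} [CommRing K] [IsDomain K] [Ring A]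
    [Algebra K A] {ω : K} {n : ℕ} (hω : IsPrimitiveRoot ω n) (x : A) :
    ∑ j ∈ range n, ∑ i ∈ range n, (ω ^ j • x) ^ i = n := by
  have hpow_sum : ∀ i ∈ range n, ∑ j ∈ range n, (ω ^ i) ^ j = if i = 0 then (n : K) else 0 := by
    intro i hi
    split_ifs with hi0
    · simp [hi0]
    · have hne : ω ^ i ≠ 1 := hω.pow_ne_one_of_pos_of_lt hi0 (mem_range.mp hi)
      have h : (ω ^ i - 1) * ∑ j ∈ range n, (ω ^ i) ^ j = 0 := by
        rw [mul_geom_sum, ← pow_mul, mul_comm, pow_mul, hω.pow_eq_one, one_pow, sub_self]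
      exact (mul_eq_zero.mp h).resolve_left (sub_ne_zero.mpr hne)
  calc ∑ j ∈ range n, ∑ i ∈ range n, (ω ^ j • x) ^ i
      = ∑ i ∈ range n, (∑ j ∈ range n, (ω ^ i) ^ j) • x ^ i := by
        rw [sum_comm]
        refine sum_congr rfl fun i _ => ?_
        simp_rw [smul_pow, ← pow_mul, mul_comm _ i, pow_mul, sum_smul]
    _ = n := by
        rw [sum_congr rfl fun i hi => by rw [hpow_sum i hi]]
        simp only [ite_smul, zero_smul, sum_ite_eq', mem_range, pow_zero, Nat.cast_smul_eq_nsmul,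
          nsmul_one]
        split_ifs with hn
        · rfl
        · simp [Nat.eq_zero_of_not_pos hn]

section InnerProductSpace

variable {E : Type*} [SeminormedAddCommGroup E] [InnerProductSpace ℂ E]

theorem norm_inner_map_le_of_norm_inner_self_le (T : E →ₗ[ℂ] E) {r : ℝ}
    (hT : ∀ x, ‖⟪x, T x⟫_ℂ‖ ≤ r * ‖x‖ ^ 2) (x y : E) :
    ‖⟪T y, x⟫_ℂ‖ ≤ r * (‖x‖ ^ 2 + ‖y‖ ^ 2) := by
  have hT' : ∀ u, ‖⟪T u, u⟫_ℂ‖ ≤ r * ‖u‖ ^ 2 := fun u => by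
    rw [← norm_inner_symm]; exact hT u
  have hpar := parallelogram_law_with_norm ℂ x y
  have hparI := parallelogram_law_with_norm ℂ x (I • y)
  rw [norm_smul, norm_I, one_mul] at hparI
  rw [inner_map_polarization, norm_div, Complex.norm_ofNat, div_le_iff₀ (by norm_num)]
  calc _ ≤ ‖⟪T (x + y), x + y⟫_ℂ‖ + ‖⟪T (x - y), x - y⟫_ℂ‖
        + ‖⟪T (x + I • y), x + I • y⟫_ℂ‖ + ‖⟪T (x - I • y), x - I • y⟫_ℂ‖ := by
        grw [norm_sub_le, norm_add_le, norm_sub_le]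
        simp only [norm_mul, norm_I, one_mul, le_refl]
    _ ≤ r * ‖x + y‖ ^ 2 + r * ‖x - y‖ ^ 2 + r * ‖x + I • y‖ ^ 2 + r * ‖x - I • y‖ ^ 2 := by
        gcongr <;> exact hT' _
    _ = r * (‖x‖ ^ 2 + ‖y‖ ^ 2) * 4 := by linear_combination r * hpar + r * hparI

theorem ContinuousLinearMap.norm_le_two_mul_of_norm_inner_self_le (T : E →L[ℂ] E) {r : ℝ}
    (hr : 0 ≤ r) (hT : ∀ x, ‖⟪x, T x⟫_ℂ‖ ≤ r * ‖x‖ ^ 2) : ‖T‖ ≤ 2 * r := by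
  refine T.opNorm_le_bound' (by positivity) fun y hy => ?_
  rcases (norm_nonneg (T y)).eq_or_lt with hTy | hTy
  · rw [← hTy]; positivity
  -- `x := (‖y‖ / ‖T y‖) • T y` has norm `‖y‖` and `⟪T y, x⟫ = ‖y‖ * ‖T y‖`
  have h := norm_inner_map_le_of_norm_inner_self_le (T : E →ₗ[ℂ] E) hT
    (((‖y‖ / ‖T y‖ : ℝ) : ℂ) • T y) y
  simp only [ContinuousLinearMap.coe_coe, inner_smul_right, inner_self_eq_norm_sq_to_K, norm_mul,
    norm_smul, norm_pow, norm_real, RCLike.norm_ofReal, Real.norm_eq_abs, abs_norm,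
    abs_of_nonneg (div_nonneg (norm_nonneg y) (norm_nonneg (T y)))] at h
  field_simp at h
  nlinarith [(norm_nonneg y).lt_of_ne' hy]

theorem re_inner_sub_smul_nonneg (T : E →ₗ[ℂ] E) (hT : ∀ x, ‖⟪x, T x⟫_ℂ‖ ≤ ‖x‖ ^ 2) {c : ℂ}
    (hc : ‖c‖ ≤ 1) (u : E) : 0 ≤ re ⟪u, u - c • T u⟫_ℂ := by
  have hcT : re (c * ⟪u, T u⟫_ℂ) ≤ ‖u‖ ^ 2 := calc
    _ ≤ ‖c‖ * ‖⟪u, T u⟫_ℂ‖ := (re_le_norm _).trans_eq (norm_mul _ _)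
    _ ≤ 1 * ‖u‖ ^ 2 := by gcongr; exact hT u
    _ = ‖u‖ ^ 2 := one_mul _
  have huu : re ⟪u, u⟫_ℂ = ‖u‖ ^ 2 := by
    rw [← RCLike.re_to_complex]; exact inner_self_eq_norm_sq u
  rw [inner_sub_right, inner_smul_right, sub_re, huu]
  linarith

theorem re_inner_sub_smul_pow_nonneg (T : E →ₗ[ℂ] E) (hT : ∀ x, ‖⟪x, T x⟫_ℂ‖ ≤ ‖x‖ ^ 2)
    {n : ℕ} (hn : n ≠ 0) {w : ℂ} (hw : ‖w‖ ≤ 1) (v : E) :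
    0 ≤ re ⟪v, v - w • (T ^ n) v⟫_ℂ := by
  obtain ⟨z, rfl⟩ := IsAlgClosed.exists_pow_nat_eq w (Nat.pos_of_ne_zero hn)
  have hz : ‖z‖ ≤ 1 := by rwa [norm_pow, pow_le_one_iff_of_nonneg (norm_nonneg z) hn] at hw
  obtain ⟨ω, hω⟩ : ∃ ω : ℂ, IsPrimitiveRoot ω n := ⟨_, isPrimitiveRoot_exp n hn⟩
  set S : ℕ → E →ₗ[ℂ] E := fun j => ∑ i ∈ range n, (ω ^ j • z • T) ^ i
  have hS_sum : ∑ j ∈ range n, S j v = (n : ℂ) • v := by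
    rw [← LinearMap.sum_apply, sum_geom_sum_smul_eq_natCast hω, Module.End.natCast_apply,
      Nat.cast_smul_eq_nsmul]
  have hS_factor : ∀ j, (1 - (ω ^ j * z) • T) * S j = 1 - z ^ n • T ^ n := fun j => by
    rw [mul_smul, mul_neg_geom_sum, smul_pow, ← pow_mul, mul_comm, pow_mul, hω.pow_eq_one,
      one_pow, one_smul, smul_pow]
  have h := sum_nonneg fun j (_ : j ∈ range n) =>
    re_inner_sub_smul_nonneg T hT (c := ω ^ j * z)
      (by rw [norm_mul, norm_pow, hω.norm'_eq_one hn, one_pow, one_mul]; exact hz) (S j v)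
  have hS_factor_apply : ∀ j, S j v - (ω ^ j * z) • T (S j v) = v - z ^ n • (T ^ n) v :=
    fun j => congrArg (· v) (hS_factor j)
  simp only [hS_factor_apply, ← re_sum, ← sum_inner, hS_sum, inner_smul_left] at h
  rw [map_natCast, ← ofReal_natCast, re_ofReal_mul] at h
  exact nonneg_of_mul_nonneg_right h (by positivity)

theorem norm_inner_pow_le (T : E →ₗ[ℂ] E) (hT : ∀ x, ‖⟪x, T x⟫_ℂ‖ ≤ ‖x‖ ^ 2) {n : ℕ}
    (hn : n ≠ 0) (x : E) : ‖⟪x, (T ^ n) x⟫_ℂ‖ ≤ ‖x‖ ^ 2 := by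
  set c := ⟪x, (T ^ n) x⟫_ℂ
  -- `w := conj c / ‖c‖` turns `c` into `‖c‖`, also for `c = 0` where division by zero gives `0`
  have hw : ‖conj c / ‖c‖‖ ≤ 1 := by
    rw [norm_div, RCLike.norm_conj, norm_real, norm_norm]; exact div_self_le_one _
  have hwc : conj c / ‖c‖ * c = ‖c‖ := by
    rw [div_mul_eq_mul_div, conj_mul', sq, mul_self_div_self]
  have h := re_inner_sub_smul_pow_nonneg T hT hn hw x
  have hxx : re ⟪x, x⟫_ℂ = ‖x‖ ^ 2 := by
    rw [← RCLike.re_to_complex]; exact inner_self_eq_norm_sq x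
  rw [inner_sub_right, inner_smul_right, hwc, sub_re, ofReal_re, hxx] at h
  linarith

end InnerProductSpace

theorem norm_inner_toEuclideanCLM_le_numRad {N : ℕ} (A : Matrix (Fin N) (Fin N) ℂ)
    (x : EuclideanSpace ℂ (Fin N)) :
    ‖⟪x, Matrix.toEuclideanCLM (𝕜 := ℂ) A x⟫_ℂ‖ ≤ numRad A * ‖x‖ ^ 2 := by
  set T := Matrix.toEuclideanCLM (𝕜 := ℂ) A
  have hbdd : BddAbove {r : ℝ | ∃ x : EuclideanSpace ℂ (Fin N), ‖x‖ = 1 ∧ r = ‖⟪x, T x⟫_ℂ‖} := by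
    refine ⟨‖T‖, ?_⟩
    rintro _ ⟨u, hu, rfl⟩
    simpa [hu] using (norm_inner_le_norm u (T u)).trans
      (mul_le_mul_of_nonneg_left (T.le_opNorm u) (norm_nonneg u))
  rcases eq_or_ne x 0 with rfl | hx
  · simp
  set u := ((‖x‖⁻¹ : ℝ) : ℂ) • x
  have hu : ‖u‖ = 1 := by
    rw [norm_smul, norm_real, norm_inv, norm_norm, inv_mul_cancel₀ (norm_ne_zero_iff.mpr hx)]
  have hxu : x = ((‖x‖ : ℝ) : ℂ) • u := by
    rw [smul_smul, ← ofReal_mul, mul_inv_cancel₀ (norm_ne_zero_iff.mpr hx), ofReal_one, one_smul]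
  have hle : ‖⟪u, T u⟫_ℂ‖ ≤ numRad A := le_csSup hbdd ⟨u, hu, rfl⟩
  calc ‖⟪x, T x⟫_ℂ‖ = ‖⟪u, T u⟫_ℂ‖ * ‖x‖ ^ 2 := by
        conv_lhs => rw [hxu, map_smul, inner_smul_left, inner_smul_right]
        simp only [norm_mul, RCLike.norm_conj, norm_real, norm_norm]
        ring
    _ ≤ numRad A * ‖x‖ ^ 2 := by gcongr

theorem stmt_0 {N : ℕ} (A : Matrix (Fin N) (Fin N) ℂ) (h : numRad A ≤ 1) :
    ∀ n : ℕ, 1 ≤ n → opNorm (A ^ n) ≤ 2 := by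
  intro n hn
  set T := Matrix.toEuclideanCLM (𝕜 := ℂ) A
  have hT : ∀ x, ‖⟪x, T x⟫_ℂ‖ ≤ ‖x‖ ^ 2 := fun x =>
    (norm_inner_toEuclideanCLM_le_numRad A x).trans (mul_le_of_le_one_left (sq_nonneg _) h)
  have hTn : ∀ x, ‖⟪x, (T ^ n) x⟫_ℂ‖ ≤ 1 * ‖x‖ ^ 2 := fun x => by
    have hx := norm_inner_pow_le (T : EuclideanSpace ℂ (Fin N) →ₗ[ℂ] EuclideanSpace ℂ (Fin N)) hT
      (n := n) (by omega) x
    rwa [one_mul, ← ContinuousLinearMap.coe_coe, ContinuousLinearMap.toLinearMap_pow]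
  have hnorm := (T ^ n).norm_le_two_mul_of_norm_inner_self_le zero_le_one hTn
  rwa [mul_one, ← map_pow] at hnorm
end

section
/- Forward Euler stability via numerical range: if A is an N×N complex matrix whose numerical range W(A) is contained in the closed disc {z : |1 + z| ≤ 1}, then r(I + A) ≤ 1 and consequently ‖(I + A)ⁿ‖ ≤ 2 for all n ≥ 1. -/
/-!
On unit vectors `⟪x, (1 + A) x⟫ = 1 + ⟪x, A x⟫`, so the hypothesis says that `B = 1 + A` has
numerical radius at most one. Berger's power inequality `r(Bⁿ) ≤ r(B)ⁿ` follows by Pearcy's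
argument: for `‖z‖ < 1` and `ω` a primitive `n`-th root of unity, each `1 - ωᵏ z B` is invertible
with numerical range in the right half-plane (it is accretive), and the partial fraction identity
`n (1 - zⁿ Bⁿ)⁻¹ = ∑ₖ (1 - ωᵏ z B)⁻¹` transfers accretivity to `1 - zⁿ Bⁿ`; letting `zⁿ` run over
the open unit disc gives `r(Bⁿ) ≤ 1`. Finally `‖T‖ ≤ 2 r(T)` by polarization.
-/

open Finset
open scoped InnerProductSpace ComplexConjugate

lemma Complex.norm_le_of_forall_re_mul_le {c : ℂ} {a : ℝ}
    (h : ∀ w : ℂ, ‖w‖ < 1 → (w * c).re ≤ a) : ‖c‖ ≤ a := by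
  have ha : 0 ≤ a := by simpa using h 0 (by simp)
  by_contra! hlt
  obtain ⟨t, hat, htc⟩ := exists_between hlt
  have ht : 0 < t := ha.trans_lt hat
  have hc : 0 < ‖c‖ := ht.trans htc
  have hwc : ((t / ‖c‖ ^ 2 : ℝ) * conj c) * c = t := by
    rw [mul_assoc, Complex.conj_mul', ← Complex.ofReal_pow, ← Complex.ofReal_mul,
      div_mul_cancel₀ _ (by positivity)]
  have hw : ‖(t / ‖c‖ ^ 2 : ℝ) * conj c‖ < 1 := by
    rw [norm_mul, Complex.norm_conj, Complex.norm_real, Real.norm_of_nonneg (by positivity),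
      div_mul_eq_mul_div, pow_two, mul_div_mul_right _ _ hc.ne', div_lt_one hc]
    exact htc
  have := h _ hw
  rw [hwc, Complex.ofReal_re] at this
  linarith

theorem IsPrimitiveRoot.sum_geom_sum_pow_smul {K R : Type*} [CommRing K] [IsDomain K] [Ring R]
    [Algebra K R] {ω : K} {n : ℕ} (hω : IsPrimitiveRoot ω n) (b : R) :
    ∑ k ∈ range n, ∑ m ∈ range n, (ω ^ k • b) ^ m = n := by
  rw [Finset.sum_comm, Finset.sum_eq_single 0]
  · simp
  · intro m hm hm0
    have hroot : ω ^ m ≠ 1 := hω.pow_ne_one_of_pos_of_lt hm0 (mem_range.1 hm)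
    have hsum : ∑ k ∈ range n, (ω ^ m) ^ k = 0 := by
      refine eq_zero_of_ne_zero_of_mul_left_eq_zero (sub_ne_zero_of_ne hroot.symm) ?_
      rw [mul_neg_geom_sum, ← pow_mul, mul_comm, pow_mul, hω.pow_eq_one, one_pow, sub_self]
    simp_rw [smul_pow, ← pow_mul, mul_comm _ m, pow_mul, ← Finset.sum_smul, hsum, zero_smul]
  · intro h0
    simp_all [show n = 0 by simpa using h0]

variable {E : Type*} [NormedAddCommGroup E] [InnerProductSpace ℂ E]

def IsAccretive (T : E →L[ℂ] E) : Prop :=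
  ∀ x, 0 ≤ (⟪x, T x⟫_ℂ).re

namespace IsAccretive

variable {S T : E →L[ℂ] E}

theorem of_mul_eq_one (hT : IsAccretive T) (h : T * S = 1) : IsAccretive S := by
  intro x
  have hx : T (S x) = x := by rw [← mul_apply_eq_comp, h, one_apply_eq_self]
  calc 0 ≤ (⟪S x, T (S x)⟫_ℂ).re := hT (S x)
    _ = (⟪x, S x⟫_ℂ).re := by rw [← inner_conj_symm, Complex.conj_re, hx]

theorem sum {ι : Type*} (s : Finset ι) {T : ι → E →L[ℂ] E} (h : ∀ i ∈ s, IsAccretive (T i)) :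
    IsAccretive (∑ i ∈ s, T i) := by
  intro x
  rw [_root_.sum_apply, inner_sum, Complex.re_sum]
  exact Finset.sum_nonneg fun i hi => h i hi x

theorem ofReal_smul (hT : IsAccretive T) {c : ℝ} (hc : 0 ≤ c) : IsAccretive ((c : ℂ) • T) := by
  intro x
  rw [smul_apply, inner_smul_right, Complex.re_ofReal_mul]
  exact mul_nonneg hc (hT x)

theorem one_sub_pow {C : E →L[ℂ] E} {n : ℕ} {ω : ℂ} (hn : 0 < n) (hω : IsPrimitiveRoot ω n)
    (hunit : ∀ k, IsUnit (1 - ω ^ k • C)) (hacc : ∀ k, IsAccretive (1 - ω ^ k • C)) :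
    IsAccretive (1 - C ^ n) := by
  let R : ℕ → E →L[ℂ] E := fun k => ↑(hunit k).unit⁻¹
  have hR : ∀ k, R k * (1 - C ^ n) = ∑ m ∈ range n, (ω ^ k • C) ^ m := by
    intro k
    have : (ω ^ k • C) ^ n = C ^ n := by
      rw [smul_pow, ← pow_mul, mul_comm, pow_mul, hω.pow_eq_one, one_pow, one_smul]
    rw [← this, ← mul_neg_geom_sum, ← mul_assoc, IsUnit.val_inv_mul, one_mul]
  have hsum : ((n : ℂ)⁻¹ • ∑ k ∈ range n, R k) * (1 - C ^ n) = 1 := by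
    rw [smul_mul_assoc, Finset.sum_mul, Finset.sum_congr rfl fun k _ => hR k,
      hω.sum_geom_sum_pow_smul, ← nsmul_one (A := E →L[ℂ] E), ← Nat.cast_smul_eq_nsmul ℂ,
      smul_smul, inv_mul_cancel₀ (by exact_mod_cast hn.ne'), one_smul]
  refine of_mul_eq_one ?_ hsum
  have := (IsAccretive.sum (range n) fun k _ => of_mul_eq_one (hacc k) (hunit k).mul_val_inv)
  simpa using this.ofReal_smul (c := (n : ℝ)⁻¹) (by positivity)

end IsAccretive

variable (B : E →L[ℂ] E)

theorem one_sub_norm_mul_sq_le_re_inner (hB : ∀ x, ‖⟪x, B x⟫_ℂ‖ ≤ ‖x‖ ^ 2) (u : ℂ) (y : E) :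
    (1 - ‖u‖) * ‖y‖ ^ 2 ≤ (⟪y, (1 - u • B) y⟫_ℂ).re := by
  have hre : (u * ⟪y, B y⟫_ℂ).re ≤ ‖u‖ * ‖y‖ ^ 2 :=
    (Complex.re_le_norm _).trans (by rw [norm_mul]; gcongr; exact hB y)
  simp only [sub_apply, one_apply_eq_self, smul_apply, inner_sub_right, inner_smul_right,
    Complex.sub_re]
  have hy : (⟪y, y⟫_ℂ).re = ‖y‖ ^ 2 := inner_self_eq_norm_sq (𝕜 := ℂ) y
  linarith

theorem isAccretive_one_sub_smul (hB : ∀ x, ‖⟪x, B x⟫_ℂ‖ ≤ ‖x‖ ^ 2) {u : ℂ} (hu : ‖u‖ ≤ 1) :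
    IsAccretive (1 - u • B) := fun y =>
  (mul_nonneg (sub_nonneg.2 hu) (sq_nonneg _)).trans (one_sub_norm_mul_sq_le_re_inner B hB u y)

theorem isUnit_one_sub_smul [FiniteDimensional ℂ E] (hB : ∀ x, ‖⟪x, B x⟫_ℂ‖ ≤ ‖x‖ ^ 2) {u : ℂ}
    (hu : ‖u‖ < 1) : IsUnit (1 - u • B) := by
  rw [ContinuousLinearMap.isUnit_iff_isUnit_toLinearMap, LinearMap.isUnit_iff_ker_eq_bot,
    LinearMap.ker_eq_bot']
  intro y hy
  have := one_sub_norm_mul_sq_le_re_inner B hB u y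
  rw [ContinuousLinearMap.coe_coe] at hy
  rw [hy, inner_zero_right, Complex.zero_re] at this
  have : ‖y‖ ^ 2 ≤ 0 := nonpos_of_mul_nonpos_right this (by linarith)
  simpa using this

theorem norm_inner_pow_apply_self_le [FiniteDimensional ℂ E] (hB : ∀ x, ‖⟪x, B x⟫_ℂ‖ ≤ ‖x‖ ^ 2)
    {n : ℕ} (hn : 0 < n) (x : E) : ‖⟪x, (B ^ n) x⟫_ℂ‖ ≤ ‖x‖ ^ 2 := by
  refine Complex.norm_le_of_forall_re_mul_le fun w hw => ?_
  obtain ⟨z, rfl⟩ := IsAlgClosed.exists_pow_nat_eq w hn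
  have hz : ‖z‖ < 1 := by
    rwa [norm_pow, pow_lt_one_iff_of_nonneg (norm_nonneg z) hn.ne'] at hw
  obtain ⟨ω, hω⟩ : ∃ ω : ℂ, IsPrimitiveRoot ω n := ⟨_, Complex.isPrimitiveRoot_exp n hn.ne'⟩
  have hrot : ∀ k, ‖ω ^ k * z‖ = ‖z‖ := fun k => by
    rw [norm_mul, norm_pow, hω.norm'_eq_one hn.ne', one_pow, one_mul]
  have hacc := IsAccretive.one_sub_pow (C := z • B) hn hω
    (fun k => by rw [smul_smul]; exact isUnit_one_sub_smul B hB ((hrot k).trans_lt hz))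
    (fun k => by rw [smul_smul]; exact isAccretive_one_sub_smul B hB ((hrot k).trans_le hz.le)) x
  rw [smul_pow, sub_apply, one_apply_eq_self, smul_apply, inner_sub_right, inner_smul_right,
    Complex.sub_re] at hacc
  have hx : (⟪x, x⟫_ℂ).re = ‖x‖ ^ 2 := inner_self_eq_norm_sq (𝕜 := ℂ) x
  linarith

theorem norm_inner_apply_le_of_norm_inner_apply_self_le {M : ℝ}
    (h : ∀ x, ‖⟪x, B x⟫_ℂ‖ ≤ M * ‖x‖ ^ 2) (x y : E) :
    ‖⟪B y, x⟫_ℂ‖ ≤ M * (‖x‖ ^ 2 + ‖y‖ ^ 2) := by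
  have h' : ∀ v, ‖⟪B v, v⟫_ℂ‖ ≤ M * ‖v‖ ^ 2 := fun v =>
    (norm_inner_symm (B v) v).trans_le (h v)
  have hI : ‖Complex.I • y‖ = ‖y‖ := by rw [norm_smul, Complex.norm_I, one_mul]
  have h₁ := parallelogram_law_with_norm ℂ x y
  have h₂ := parallelogram_law_with_norm ℂ x (Complex.I • y)
  have hpol := inner_map_polarization (B : E →ₗ[ℂ] E) x y
  simp only [ContinuousLinearMap.coe_coe] at hpol
  rw [hpol, norm_div, Complex.norm_ofNat]
  calc _ ≤ (‖⟪B (x + y), x + y⟫_ℂ‖ + ‖⟪B (x - y), x - y⟫_ℂ‖ +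
            ‖⟪B (x + Complex.I • y), x + Complex.I • y⟫_ℂ‖ +
            ‖⟪B (x - Complex.I • y), x - Complex.I • y⟫_ℂ‖) / 4 := by
        gcongr
        grw [norm_sub_le, norm_add_le, norm_sub_le]
        simp only [norm_mul, Complex.norm_I, one_mul, le_refl]
    _ ≤ (M * ‖x + y‖ ^ 2 + M * ‖x - y‖ ^ 2 + M * ‖x + Complex.I • y‖ ^ 2 +
            M * ‖x - Complex.I • y‖ ^ 2) / 4 := by gcongr <;> exact h' _
    _ = M * (‖x‖ ^ 2 + ‖y‖ ^ 2) := by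
        rw [hI] at h₂
        linear_combination (M / 4) * (h₁ + h₂)

theorem norm_le_two_mul_of_norm_inner_apply_self_le {M : ℝ} (hM : 0 ≤ M)
    (h : ∀ x, ‖⟪x, B x⟫_ℂ‖ ≤ M * ‖x‖ ^ 2) : ‖B‖ ≤ 2 * M := by
  refine B.opNorm_le_bound (by positivity) fun y => ?_
  rcases eq_or_ne (B y) 0 with hBy | hBy
  · rw [hBy, norm_zero]
    positivity
  have hy : y ≠ 0 := by rintro rfl; exact hBy (map_zero B)
  have hBy' : 0 < ‖B y‖ := norm_pos_iff.2 hBy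
  have hy' : 0 < ‖y‖ := norm_pos_iff.2 hy
  -- test the polarization bound against the multiple of `B y` that has the norm of `y`
  set x : E := ((‖y‖ / ‖B y‖ : ℝ) : ℂ) • B y
  have hx : ‖x‖ = ‖y‖ := by
    rw [norm_smul, Complex.norm_real, Real.norm_of_nonneg (by positivity),
      div_mul_cancel₀ _ hBy'.ne']
  have hBx : ‖⟪B y, x⟫_ℂ‖ = ‖y‖ * ‖B y‖ := by
    rw [inner_smul_right, inner_self_eq_norm_sq_to_K, norm_mul, norm_pow, Complex.norm_real,
      RCLike.norm_ofReal, abs_norm, Real.norm_of_nonneg (by positivity)]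
    field_simp
  have := norm_inner_apply_le_of_norm_inner_apply_self_le B h x y
  rw [hBx, hx] at this
  nlinarith

theorem norm_inner_apply_self_le_of_norm_eq_one {M : ℝ} (h : ∀ x, ‖x‖ = 1 → ‖⟪x, B x⟫_ℂ‖ ≤ M)
    (x : E) : ‖⟪x, B x⟫_ℂ‖ ≤ M * ‖x‖ ^ 2 := by
  rcases eq_or_ne x 0 with rfl | hx
  · simp
  have hx' : 0 < ‖x‖ := norm_pos_iff.2 hx
  have hu : ‖(‖x‖⁻¹ : ℂ) • x‖ = 1 := by
    rw [norm_smul, norm_inv, Complex.norm_real, norm_norm, inv_mul_cancel₀ hx'.ne']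
  have := h _ hu
  rw [map_smul, inner_smul_left, inner_smul_right, norm_mul, norm_mul] at this
  simp only [Complex.norm_conj, norm_inv, Complex.norm_real, norm_norm] at this
  rw [← mul_assoc, ← mul_inv, ← pow_two, inv_mul_le_iff₀ (by positivity)] at this
  linarith

theorem stmt_9 {N : ℕ} (A : Matrix (Fin N) (Fin N) ℂ)
    (h : numRange A ⊆ Metric.closedBall (-1 : ℂ) 1) :
    numRad (1 + A) ≤ 1 ∧ ∀ n : ℕ, 1 ≤ n → opNorm ((1 + A) ^ n) ≤ 2 := by
  set B := Matrix.toEuclideanCLM (𝕜 := ℂ) (1 + A)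
  have hunit : ∀ x, ‖x‖ = 1 → ‖⟪x, B x⟫_ℂ‖ ≤ 1 := fun x hx => by
    have hW : ⟪x, B x⟫_ℂ = 1 + ⟪x, Matrix.toEuclideanCLM (𝕜 := ℂ) A x⟫_ℂ := by
      simp [B, hx]
    simpa [hW, Complex.dist_eq, add_comm] using h ⟨x, hx, rfl⟩
  refine ⟨Real.sSup_le (fun r ⟨x, hx, hr⟩ => hr ▸ hunit x hx) zero_le_one, fun n hn => ?_⟩
  have hB := norm_inner_apply_self_le_of_norm_eq_one B hunit
  have hBn := norm_le_two_mul_of_norm_inner_apply_self_le (B ^ n) zero_le_one fun x => by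
    simpa using norm_inner_pow_apply_self_le B (by simpa using hB) hn x
  simpa only [opNorm, map_pow, mul_one] using hBn
end
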